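/- A monoid homomorphism f : A → B is a regular Schreier epimorphism if and only if there exists a monoid homomorphism g : C → A such that f ∘ g is surjective and the split point (π₂ : A ×_B C → C, ⟨g, 1_C⟩) is a Schreier point. -/

import Mathlib

open Function

/-- `a` is a representative of `b` for `f`. -/
def IsRep {A B : Type*} [AddMonoid A] [AddMonoid B] (f : A →+ B) (a : A) (b : B) : Prop :=
  f a = b ∧ ∀ a', f a' = b → ∃! k, f k = 0 ∧ a' = k + a

/-- A (split) Schreier point. -/
def SchreierPoint {E D : Type*} [AddMonoid E] [AddMonoid D] (p : E →+ D) (s : D →+ E) : Prop :=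
  ∀ e, ∃! k, p k = 0 ∧ e = k + s (p e)

/-- A Schreier generalized point. -/
def SchreierGP {A B C : Type*} [AddMonoid A] [AddMonoid B] [AddMonoid C]
    (f : A →+ B) (g : C →+ A) : Prop :=
  Surjective (f.comp g) ∧ ∀ a c, f a = f (g c) → ∃! k, f k = 0 ∧ a = k + g c

/-- The pullback of `f : A →+ B` and `h : C →+ B`, as a submonoid of `A × C`. -/
def pbk {A B C : Type*} [AddMonoid A] [AddMonoid B] [AddMonoid C]
    (f : A →+ B) (h : C →+ B) : AddSubmonoid (A × C) where
  carrier := {p | f p.1 = h p.2}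
  zero_mem' := by simp
  add_mem' := by
    intro p q hp hq
    simp only [Set.mem_setOf_eq, Prod.fst_add, Prod.snd_add, map_add] at *
    rw [hp, hq]

/-- The second projection `A ×_B C →+ C`. -/
def proj2 {A B C : Type*} [AddMonoid A] [AddMonoid B] [AddMonoid C]
    (f : A →+ B) (h : C →+ B) : (pbk f h) →+ C :=
  (AddMonoidHom.snd A C).comp (pbk f h).subtype

/-- The induced morphism `⟨g, 1_C⟩ : C →+ A ×_B C`. -/
def liftg {A B C : Type*} [AddMonoid A] [AddMonoid B] [AddMonoid C]
    (f : A →+ B) (g : C →+ A) : C →+ (pbk f (f.comp g)) :=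
  AddMonoidHom.codRestrict (g.prod (AddMonoidHom.id C)) (pbk f (f.comp g)) (fun _ => rfl)

/-! The split point `(π₂, ⟨g, 1⟩)` is Schreier exactly when every `a` with `f a = f (g c)` is
uniquely `k + g c` with `f k = 0`, i.e. when each `g c` represents `f (g c)`. Two representatives
of the same fibre differ by a unit of the kernel on the left, and such a unit can be moved from
the right of a representative to its left. Hence a sum of representatives `v₁ + g c₁ + v₂ + g c₂`
rewrites as a kernel unit plus `g (c₁ + c₂)`, itself a representative, so the representatives form
a submonoid. Conversely, that submonoid with its inclusion serves as `g`. -/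

variable {A B C : Type*} [AddMonoid A] [AddMonoid B] [AddMonoid C]

namespace IsRep

variable {f : A →+ B} {a a' k v : A} {b : B}

lemma eq_zero_of_add_eq_self (ha : IsRep f a b) (hk : f k = 0) (h : k + a = a) : k = 0 :=
  (ha.2 a ha.1).unique ⟨hk, h.symm⟩ ⟨map_zero f, (zero_add a).symm⟩

lemma exists_isAddUnit_add_eq (ha : IsRep f a b) (ha' : IsRep f a' b) :
    ∃ v, f v = 0 ∧ IsAddUnit v ∧ a' = v + a := by
  obtain ⟨v, ⟨hv, rfl⟩, -⟩ := ha.2 a' ha'.1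
  obtain ⟨k, ⟨hk, hka⟩, -⟩ := ha'.2 a ha.1
  have hkv : k + v = 0 :=
    ha.eq_zero_of_add_eq_self (by simp [hk, hv]) (by rw [add_assoc, ← hka])
  have hvk : v + k = 0 :=
    ha'.eq_zero_of_add_eq_self (by simp [hk, hv]) (by rw [add_assoc, ← hka])
  exact ⟨v, hv, ⟨⟨v, k, hvk, hkv⟩, rfl⟩, rfl⟩

lemma isAddUnit_add (ha : IsRep f a b) (hv : f v = 0) (hu : IsAddUnit v) :
    IsRep f (v + a) b := by
  obtain ⟨⟨v, u, hvu, huv⟩, rfl⟩ := hu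
  have hu0 : f u = 0 := by simpa [hv] using congrArg f huv
  refine ⟨by simp [hv, ha.1], fun a' ha' => ?_⟩
  obtain ⟨k, ⟨hk, rfl⟩, hk_uniq⟩ := ha.2 a' ha'
  refine ⟨k + u, ⟨by simp [hk, hu0], by rw [add_assoc, ← add_assoc u, huv, zero_add]⟩, ?_⟩
  rintro k' ⟨hk', h⟩
  have : k' + v = k := hk_uniq _ ⟨by simp [hk', hv], by rw [h, add_assoc]⟩
  rw [← this, add_assoc, hvu, add_zero]

lemma exists_add_eq_add (ha : IsRep f a b) (hv : f v = 0) (hu : IsAddUnit v) :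
    ∃ w, f w = 0 ∧ IsAddUnit w ∧ a + v = w + a := by
  obtain ⟨⟨v, u, hvu, huv⟩, rfl⟩ := hu
  have hu0 : f u = 0 := by simpa [hv] using congrArg f huv
  obtain ⟨w, ⟨hw, hwa⟩, -⟩ := ha.2 (a + v) (by simp [hv, ha.1])
  obtain ⟨w', ⟨hw', hw'a⟩, -⟩ := ha.2 (a + u) (by simp [hu0, ha.1])
  have hww' : w + w' = 0 := ha.eq_zero_of_add_eq_self (by simp [hw, hw']) <| by
    rw [add_assoc, ← hw'a, ← add_assoc, ← hwa, add_assoc, hvu, add_zero]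
  have hw'w : w' + w = 0 := ha.eq_zero_of_add_eq_self (by simp [hw, hw']) <| by
    rw [add_assoc, ← hwa, ← add_assoc, ← hw'a, add_assoc, huv, add_zero]
  exact ⟨w, hw, ⟨⟨w, w', hww', hw'w⟩, rfl⟩, hwa⟩

end IsRep

section Pullback

variable {f : A →+ B} {g : C →+ A}

lemma mem_pbk {h : C →+ B} {p : A × C} : p ∈ pbk f h ↔ f p.1 = h p.2 := Iff.rfl

lemma proj2_apply {h : C →+ B} (e : pbk f h) : proj2 f h e = (e : A × C).2 := rfl

lemma coe_liftg_apply (c : C) : (liftg f g c : A × C) = (g c, c) := rfl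

lemma mk_zero_mem_pbk {k : A} (hk : f k = 0) : ((k, 0) : A × C) ∈ pbk f (f.comp g) := by
  simp [mem_pbk, hk]

lemma map_fst_eq_zero_of_snd_eq_zero {k : pbk f (f.comp g)} (hk : (k : A × C).2 = 0) :
    f (k : A × C).1 = 0 :=
  (mem_pbk.1 k.2).trans (by simp [hk])

lemma proj2_eq_zero_and_eq_add_liftg_iff {e k : pbk f (f.comp g)} :
    (proj2 f (f.comp g) k = 0 ∧ e = k + liftg f g (proj2 f (f.comp g) e)) ↔
      ((k : A × C).2 = 0 ∧ (e : A × C).1 = (k : A × C).1 + g (e : A × C).2) := by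
  simp only [proj2_apply, Subtype.ext_iff, Prod.ext_iff, AddSubmonoid.coe_add, coe_liftg_apply,
    Prod.fst_add, Prod.snd_add]
  constructor
  · rintro ⟨hk, he, -⟩
    exact ⟨hk, he⟩
  · rintro ⟨hk, he⟩
    exact ⟨hk, he, by rw [hk, zero_add]⟩

lemma schreierPoint_pbk_iff :
    SchreierPoint (proj2 f (f.comp g)) (liftg f g) ↔
      ∀ a c, f a = f (g c) → ∃! k, f k = 0 ∧ a = k + g c := by
  constructor
  · intro h a c hac
    obtain ⟨K, hK, hK_uniq⟩ := h ⟨(a, c), hac⟩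
    obtain ⟨hK₂, hK₁⟩ := proj2_eq_zero_and_eq_add_liftg_iff.1 hK
    refine ⟨(K : A × C).1, ⟨map_fst_eq_zero_of_snd_eq_zero hK₂, hK₁⟩, fun k hk => ?_⟩
    have := hK_uniq ⟨(k, 0), mk_zero_mem_pbk hk.1⟩
      (proj2_eq_zero_and_eq_add_liftg_iff.2 ⟨rfl, hk.2⟩)
    exact congrArg (fun K : pbk f (f.comp g) => (K : A × C).1) this
  · rintro h ⟨⟨a, c⟩, hac⟩
    obtain ⟨k, hk, hk_uniq⟩ := h a c hac
    refine ⟨⟨(k, 0), mk_zero_mem_pbk hk.1⟩, proj2_eq_zero_and_eq_add_liftg_iff.2 ⟨rfl, hk.2⟩,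
      fun K hK => ?_⟩
    obtain ⟨hK₂, hK₁⟩ := proj2_eq_zero_and_eq_add_liftg_iff.1 hK
    exact Subtype.ext (Prod.ext (hk_uniq _ ⟨map_fst_eq_zero_of_snd_eq_zero hK₂, hK₁⟩) hK₂)

lemma schreierGP_iff :
    SchreierGP f g ↔
      Surjective (f.comp g) ∧ SchreierPoint (proj2 f (f.comp g)) (liftg f g) := by
  rw [schreierPoint_pbk_iff, SchreierGP]

end Pullback

namespace SchreierGP

variable {f : A →+ B} {g : C →+ A}

lemma isRep (h : SchreierGP f g) (c : C) : IsRep f (g c) (f (g c)) :=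
  ⟨rfl, fun a ha => h.2 a c ha⟩

lemma exists_isRep_comp (h : SchreierGP f g) (b : B) : ∃ c, IsRep f (g c) b := by
  obtain ⟨c, rfl⟩ := h.1 b
  exact ⟨c, h.isRep c⟩

lemma isRep_add (h : SchreierGP f g) {a₁ a₂ : A} {b₁ b₂ : B} (ha₁ : IsRep f a₁ b₁)
    (ha₂ : IsRep f a₂ b₂) : IsRep f (a₁ + a₂) (b₁ + b₂) := by
  obtain ⟨c₁, hc₁⟩ := h.exists_isRep_comp b₁
  obtain ⟨c₂, hc₂⟩ := h.exists_isRep_comp b₂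
  obtain ⟨v₁, hv₁, hu₁, rfl⟩ := hc₁.exists_isAddUnit_add_eq ha₁
  obtain ⟨v₂, hv₂, hu₂, rfl⟩ := hc₂.exists_isAddUnit_add_eq ha₂
  obtain ⟨w, hw, hwu, hvw⟩ := hc₁.exists_add_eq_add hv₂ hu₂
  have hc : IsRep f (g (c₁ + c₂)) (b₁ + b₂) := by
    rw [← hc₁.1, ← hc₂.1, ← map_add, ← map_add]
    exact h.isRep _
  convert hc.isAddUnit_add (by simp [hv₁, hw]) (hu₁.add hwu) using 1
  rw [map_add, add_assoc v₁, ← add_assoc (g c₁), hvw]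
  simp only [add_assoc]

lemma exists_addSubmonoid_eq_reps (h : SchreierGP f g) :
    ∃ M : AddSubmonoid A, (M : Set A) = {a | ∃ b, IsRep f a b} :=
  ⟨{ carrier := {a | ∃ b, IsRep f a b}
     zero_mem' := ⟨0, by simpa using h.isRep 0⟩
     add_mem' := fun ⟨_, ha₁⟩ ⟨_, ha₂⟩ => ⟨_, h.isRep_add ha₁ ha₂⟩ }, rfl⟩

end SchreierGP

lemma schreierGP_addSubmonoid_subtype {f : A →+ B} {M : AddSubmonoid A}
    (hM : (M : Set A) = {a | ∃ b, IsRep f a b}) (hrep : ∀ b, ∃ a, IsRep f a b) :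
    SchreierGP f M.subtype := by
  have mem_iff (a : A) : a ∈ M ↔ ∃ b, IsRep f a b := by rw [← SetLike.mem_coe, hM]; rfl
  refine ⟨fun b => ?_, fun a c hac => ?_⟩
  · obtain ⟨a, ha⟩ := hrep b
    exact ⟨⟨a, (mem_iff a).2 ⟨b, ha⟩⟩, ha.1⟩
  · obtain ⟨b, hc⟩ := (mem_iff c).1 c.2
    exact hc.2 a (hac.trans hc.1)

/-- `f : A →+ B` is a regular Schreier epimorphism iff there is a monoid `C` and a
homomorphism `g : C →+ A` with `f ∘ g` surjective such that the split point
`(π₂, ⟨g,1⟩)` is a Schreier point. -/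
theorem stmt13 {A B : Type u} [AddMonoid A] [AddMonoid B] (f : A →+ B) :
    (Surjective f ∧ (∀ b : B, ∃ a : A, IsRep f a b) ∧
      (∃ M : AddSubmonoid A, (M : Set A) = {a | ∃ b, IsRep f a b})) ↔
    (∃ (C : Type u) (_ : AddMonoid C) (g : C →+ A),
      Surjective (f.comp g) ∧ SchreierPoint (proj2 f (f.comp g)) (liftg f g)) := by
  simp_rw [← schreierGP_iff]
  constructor
  · rintro ⟨-, hrep, M, hM⟩
    exact ⟨M, inferInstance, M.subtype, schreierGP_addSubmonoid_subtype hM hrep⟩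
  · rintro ⟨C, _, g, h⟩
    refine ⟨.of_comp h.1, fun b => ?_, h.exists_addSubmonoid_eq_reps⟩
    obtain ⟨c, hc⟩ := h.exists_isRep_comp b
    exact ⟨g c, hc⟩
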